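/- arXiv:1407.5409 — 2 statements merged into one kernel-verified Lean document; each statement's English description precedes it below -/
import Mathlib

section
/- Let G be a d-regular vertex-transitive bipartite graph on 2n vertices and (u,v) an edge of G. Then m_n(G)·m_{n-2}(G-{u,v}) + m_{n-1}(G)·m_{n-1}(G-{u,v}) ≥ (m_{n-1}(G)/n)². -/
open scoped Classical
open Finset

/-- Number of matchings with exactly `k` edges in `G`. -/
noncomputable def numMatchings {V : Type*} [Fintype V] (G : SimpleGraph V) (k : ℕ) : ℕ :=
  (G.edgeFinset.powerset.filter (fun M => M.card = k ∧
    ∀ e ∈ M, ∀ f ∈ M, e ≠ f → ∀ v : V, ¬(v ∈ e ∧ v ∈ f))).card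

/-- Matching generating function `M(G,t) = Σ_k m_k(G) t^k`. -/
noncomputable def matchGen {V : Type*} [Fintype V] (G : SimpleGraph V) (t : ℝ) : ℝ :=
  ∑ k ∈ Finset.range (Fintype.card V + 1), (numMatchings G k : ℝ) * t ^ k

/-- Derivative `M'(G,t) = Σ_k k·m_k(G) t^(k-1)`. -/
noncomputable def matchGenDeriv {V : Type*} [Fintype V] (G : SimpleGraph V) (t : ℝ) : ℝ :=
  ∑ k ∈ Finset.range (Fintype.card V + 1), (k : ℝ) * (numMatchings G k : ℝ) * t ^ (k - 1)

/-- The graph obtained from `G` by deleting all vertices in `S` (kept as isolated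
vertices, which does not affect matchings). -/
def deleteVerts {V : Type*} (G : SimpleGraph V) (S : Set V) : SimpleGraph V where
  Adj a b := G.Adj a b ∧ a ∉ S ∧ b ∉ S
  symm := ⟨fun _ _ h => ⟨h.1.symm, h.2.2, h.2.1⟩⟩
  loopless := ⟨fun _ h => G.irrefl h.1⟩

/-!
Every `(n-1)`-matching of `G` misses exactly two vertices, so
`∑ w, m_{n-1}(G - w) = 2 m_{n-1}(G)`; by vertex-transitivity all summands are equal, hence
`m_{n-1}(G - w) = m_{n-1}(G) / n`. It remains to show
`m_{n-1}(G - u) m_{n-1}(G - v) ≤ m_n(G) m_{n-2}(G - u - v) + m_{n-1}(G) m_{n-1}(G - u - v)`.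
Given matchings `M` missing `u` and `N` missing `v`, exchange them along the component of `u` in
`M ∆ N`. This component is an alternating path leaving `u` through an `N`-edge; since `G` is
bipartite and `u ∼ v`, it cannot reach `v`, whose only possible edge is in `M`. So the new `N`
misses both `u` and `v`, the total size `2n - 2` is preserved, and the exchange is an involution,
hence injective on pairs.
-/
open scoped symmDiff

section EdgeMatching

variable {V : Type*}

def IsEdgeMatching (M : Finset (Sym2 V)) : Prop :=
  ∀ e ∈ M, ∀ f ∈ M, e ≠ f → ∀ v : V, ¬(v ∈ e ∧ v ∈ f)

lemma IsEdgeMatching.eq_of_mem {M : Finset (Sym2 V)} (hM : IsEdgeMatching M) {e f : Sym2 V}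
    (he : e ∈ M) (hf : f ∈ M) {x : V} (hxe : x ∈ e) (hxf : x ∈ f) : e = f := by
  by_contra hef
  exact hM e he f hf hef x ⟨hxe, hxf⟩

lemma IsEdgeMatching.image {W : Type*} {M : Finset (Sym2 V)} (hM : IsEdgeMatching M)
    {φ : V → W} (hφ : Function.Injective φ) : IsEdgeMatching (M.image (Sym2.map φ)) := by
  simp only [IsEdgeMatching, Finset.mem_image]
  rintro _ ⟨e, he, rfl⟩ _ ⟨f, hf, rfl⟩ hef y ⟨hye, hyf⟩
  obtain ⟨x, hxe, rfl⟩ := Sym2.mem_map.mp hye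
  obtain ⟨x', hx'f, hxx'⟩ := Sym2.mem_map.mp hyf
  rw [hφ hxx'] at hx'f
  exact hef (congrArg _ (hM.eq_of_mem he hf hxe hx'f))

variable [DecidableEq V]

lemma card_biUnion_toFinset {M : Finset (Sym2 V)} (hM : IsEdgeMatching M)
    (hdiag : ∀ e ∈ M, ¬e.IsDiag) : (M.biUnion Sym2.toFinset).card = 2 * M.card := by
  rw [Finset.card_biUnion, Finset.sum_congr rfl (fun e he => Sym2.card_toFinset_of_not_isDiag e
    (hdiag e he)), Finset.sum_const, smul_eq_mul, mul_comm]
  intro e he f hf hef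
  rw [Function.onFun, Finset.disjoint_left]
  intro x hxe hxf
  exact hM e he f hf hef x ⟨Sym2.mem_toFinset.mp hxe, Sym2.mem_toFinset.mp hxf⟩

end EdgeMatching

section Matchings

variable {V : Type*} [Fintype V]

noncomputable def matchings (G : SimpleGraph V) (k : ℕ) : Finset (Finset (Sym2 V)) :=
  G.edgeFinset.powerset.filter (fun M => M.card = k ∧ IsEdgeMatching M)

lemma numMatchings_eq_card (G : SimpleGraph V) (k : ℕ) :
    numMatchings G k = (matchings G k).card := by
  unfold numMatchings matchings IsEdgeMatching
  congr

lemma mem_matchings {G : SimpleGraph V} {k : ℕ} {M : Finset (Sym2 V)} :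
    M ∈ matchings G k ↔ M ⊆ G.edgeFinset ∧ M.card = k ∧ IsEdgeMatching M := by
  simp [matchings]

lemma mem_edgeFinset_deleteVerts {G : SimpleGraph V} {S : Set V} {e : Sym2 V} :
    e ∈ (deleteVerts G S).edgeFinset ↔ e ∈ G.edgeFinset ∧ ∀ w ∈ S, w ∉ e := by
  induction e using Sym2.ind with
  | _ a b =>
    rw [SimpleGraph.mem_edgeFinset, SimpleGraph.mem_edgeFinset, SimpleGraph.mem_edgeSet,
      SimpleGraph.mem_edgeSet]
    simp only [deleteVerts, Sym2.mem_iff]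
    grind

lemma mem_matchings_deleteVerts {G : SimpleGraph V} {S : Set V} {k : ℕ} {M : Finset (Sym2 V)} :
    M ∈ matchings (deleteVerts G S) k ↔ M ∈ matchings G k ∧ ∀ e ∈ M, ∀ w ∈ S, w ∉ e := by
  simp only [mem_matchings, Finset.subset_iff, mem_edgeFinset_deleteVerts]
  grind

lemma image_mem_matchings {W : Type*} [Fintype W] {G : SimpleGraph V} {G' : SimpleGraph W}
    (φ : G ≃g G') {k : ℕ} {M : Finset (Sym2 V)} (hM : M ∈ matchings G k) :
    M.image (Sym2.map φ) ∈ matchings G' k := by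
  obtain ⟨hsub, hcard, hmat⟩ := mem_matchings.mp hM
  refine mem_matchings.mpr ⟨?_, ?_, hmat.image φ.injective⟩
  · intro _ he'
    obtain ⟨e, he, rfl⟩ := Finset.mem_image.mp he'
    simpa [φ.map_mem_edgeSet_iff] using hsub he
  · rw [Finset.card_image_of_injective _ (Sym2.map.injective φ.injective), hcard]

lemma numMatchings_congr {W : Type*} [Fintype W] {G : SimpleGraph V} {G' : SimpleGraph W}
    (φ : G ≃g G') (k : ℕ) : numMatchings G k = numMatchings G' k := by
  rw [numMatchings_eq_card, numMatchings_eq_card]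
  refine Finset.card_nbij' (fun M => M.image (Sym2.map φ)) (fun M => M.image (Sym2.map φ.symm))
    (fun M hM => image_mem_matchings φ hM) (fun M hM => image_mem_matchings φ.symm hM) ?_ ?_ <;>
  · intro M _
    simp [Finset.image_image, Sym2.map_map, Function.comp_def]

def SimpleGraph.Iso.deleteVerts {W : Type*} {G : SimpleGraph V} {G' : SimpleGraph W}
    (φ : G ≃g G') (S : Set V) : _root_.deleteVerts G S ≃g _root_.deleteVerts G' (φ '' S) where
  toEquiv := φ.toEquiv
  map_rel_iff' {a b} := by
    show G'.Adj (φ a) (φ b) ∧ φ a ∉ φ '' S ∧ φ b ∉ φ '' S ↔ _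
    rw [φ.map_adj_iff, φ.injective.mem_set_image, φ.injective.mem_set_image]
    rfl

lemma card_biUnion_toFinset_of_mem_matchings {G : SimpleGraph V} {k : ℕ}
    {M : Finset (Sym2 V)} (hM : M ∈ matchings G k) : (M.biUnion Sym2.toFinset).card = 2 * k := by
  obtain ⟨hsub, rfl, hmat⟩ := mem_matchings.mp hM
  exact card_biUnion_toFinset hmat
    (fun e he => G.not_isDiag_of_mem_edgeSet (G.mem_edgeFinset.mp (hsub he)))

lemma two_mul_le_card {G : SimpleGraph V} {k : ℕ} {M : Finset (Sym2 V)}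
    (hM : M ∈ matchings G k) : 2 * k ≤ Fintype.card V :=
  card_biUnion_toFinset_of_mem_matchings hM ▸ Finset.card_le_univ _

lemma two_mul_add_card_le_card {G : SimpleGraph V} {S : Finset V} {k : ℕ} {M : Finset (Sym2 V)}
    (hM : M ∈ matchings (deleteVerts G S) k) : 2 * k + S.card ≤ Fintype.card V := by
  obtain ⟨hM, hS⟩ := mem_matchings_deleteVerts.mp hM
  rw [← card_biUnion_toFinset_of_mem_matchings hM, ← Finset.card_union_of_disjoint]
  · exact Finset.card_le_univ _
  · simp only [Finset.disjoint_left, Finset.mem_biUnion, Sym2.mem_toFinset]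
    rintro w ⟨e, he, hwe⟩ hwS
    exact hS e he w hwS hwe

lemma sum_numMatchings_deleteVerts_singleton (G : SimpleGraph V) (k : ℕ) :
    ∑ w, numMatchings (deleteVerts G {w}) k = (Fintype.card V - 2 * k) * numMatchings G k := by
  calc ∑ w, numMatchings (deleteVerts G {w}) k
      = ∑ w, ((matchings G k).filter (fun M => w ∉ M.biUnion Sym2.toFinset)).card := by
        refine Finset.sum_congr rfl fun w _ => ?_
        rw [numMatchings_eq_card]
        congr 1
        ext M
        simp [mem_matchings_deleteVerts]
    _ = ∑ M ∈ matchings G k, (Finset.univ.filter (fun w => w ∉ M.biUnion Sym2.toFinset)).card :=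
        Finset.sum_card_bipartiteAbove_eq_sum_card_bipartiteBelow _
    _ = ∑ M ∈ matchings G k, (Fintype.card V - 2 * k) := by
        refine Finset.sum_congr rfl fun M hM => ?_
        rw [Finset.filter_notMem_eq_sdiff, Finset.card_univ_sdiff,
          card_biUnion_toFinset_of_mem_matchings hM]
    _ = (Fintype.card V - 2 * k) * numMatchings G k := by
        rw [Finset.sum_const, smul_eq_mul, numMatchings_eq_card, mul_comm]

end Matchings

section Alternating

variable {V : Type*} {M N : Finset (Sym2 V)}

lemma IsEdgeMatching.mem_iff_notMem_of_mem_symmDiff (hM : IsEdgeMatching M)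
    (hN : IsEdgeMatching N) {e f : Sym2 V} (he : e ∈ M ∆ N) (hf : f ∈ M ∆ N) (hef : e ≠ f)
    {x : V} (hxe : x ∈ e) (hxf : x ∈ f) : f ∈ M ↔ e ∉ M := by
  rw [Finset.mem_symmDiff] at he hf
  constructor
  · exact fun hfM heM => hef (hM.eq_of_mem heM hfM hxe hxf)
  · intro heM
    by_contra hfM
    exact hef (hN.eq_of_mem (he.resolve_left (by tauto)).1 (hf.resolve_left (by tauto)).1 hxe hxf)

/-- `e` is the edge through which the trail `q` is entered. Consecutive edges of a trail in
`M ∆ N` alternate between `M` and `N`, just as `P` alternates along edges, so the agreement of `P`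
with membership in `M` propagates to the last edge. -/
lemma IsEdgeMatching.exists_mem_of_isTrail (hM : IsEdgeMatching M) (hN : IsEdgeMatching N)
    {P : V → Prop} (hP : ∀ x y, s(x, y) ∈ M ∆ N → (P x ↔ ¬P y)) {z b : V}
    (q : (SimpleGraph.fromEdgeSet (↑(M ∆ N) : Set (Sym2 V))).Walk z b) (hq : q.IsTrail)
    {e : Sym2 V} (he : e ∈ M ∆ N) (hze : z ∈ e) (heq : e ∉ q.edges) (hPe : P z ↔ e ∈ M) :
    ∃ f ∈ M ∆ N, b ∈ f ∧ (P b ↔ f ∈ M) := by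
  induction q generalizing e with
  | nil => exact ⟨e, he, hze, hPe⟩
  | @cons z z' b hadj q ih =>
    rw [SimpleGraph.Walk.isTrail_cons] at hq
    rw [SimpleGraph.Walk.edges_cons, List.mem_cons, not_or] at heq
    have hf : s(z, z') ∈ M ∆ N := ((SimpleGraph.fromEdgeSet_adj _).mp hadj).1
    have hswap := hM.mem_iff_notMem_of_mem_symmDiff hN he hf heq.1 hze (Sym2.mem_mk_left z z')
    have hPz := hP z z' hf
    exact ih hq.1 hf (Sym2.mem_mk_right z z') hq.2 (by tauto)

lemma IsEdgeMatching.not_reachable (hM : IsEdgeMatching M) (hN : IsEdgeMatching N)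
    {c : V → Fin 2} (hc : ∀ x y, s(x, y) ∈ M ∆ N → c x ≠ c y) {u v : V}
    (hu : ∀ e ∈ M, u ∉ e) (hv : ∀ e ∈ N, v ∉ e) (huv : c u ≠ c v) :
    ¬(SimpleGraph.fromEdgeSet (↑(M ∆ N) : Set (Sym2 V))).Reachable u v := by
  rintro ⟨p⟩
  have hfin : ∀ a b c : Fin 2, a ≠ b → (a = c ↔ ¬b = c) := by decide
  have hP : ∀ x y, s(x, y) ∈ M ∆ N → (c x = c u ↔ ¬c y = c u) :=
    fun x y hxy => hfin _ _ _ (hc x y hxy)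
  obtain ⟨q, hq⟩ : ∃ q : (SimpleGraph.fromEdgeSet (↑(M ∆ N) : Set (Sym2 V))).Walk u v,
      q.IsTrail := ⟨p.bypass, p.bypass_isPath.isTrail⟩
  cases q with
  | nil => exact huv rfl
  | @cons _ z _ hadj q =>
    rw [SimpleGraph.Walk.isTrail_cons] at hq
    have he : s(u, z) ∈ M ∆ N := ((SimpleGraph.fromEdgeSet_adj _).mp hadj).1
    have heM : s(u, z) ∉ M := fun h => hu _ h (Sym2.mem_mk_left u z)
    have hzu : ¬c z = c u := fun h => hc u z he h.symm
    obtain ⟨f, hf, hvf, hPf⟩ := hM.exists_mem_of_isTrail hN hP q hq.1 he (Sym2.mem_mk_right u z)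
      hq.2 (by tauto)
    have hfM : f ∈ M := by
      rcases Finset.mem_symmDiff.mp hf with h | h
      exacts [h.1, absurd hvf (hv f h.1)]
    exact huv (hPf.mpr hfM).symm

end Alternating

section Component

variable {V : Type*}

noncomputable def edgeComponent (D : Finset (Sym2 V)) (u : V) : Finset (Sym2 V) :=
  D.filter (fun e => ∃ x ∈ e, (SimpleGraph.fromEdgeSet (↑D : Set (Sym2 V))).Reachable u x)

variable {D : Finset (Sym2 V)} {u : V} {e f : Sym2 V}

lemma edgeComponent_subset : edgeComponent D u ⊆ D := Finset.filter_subset _ _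

lemma reachable_of_mem_edgeComponent (he : e ∈ edgeComponent D u) {x : V} (hx : x ∈ e) :
    (SimpleGraph.fromEdgeSet (↑D : Set (Sym2 V))).Reachable u x := by
  obtain ⟨heD, y, hy, hry⟩ := Finset.mem_filter.mp he
  obtain rfl | hyx := eq_or_ne y x
  · exact hry
  · rw [(Sym2.mem_and_mem_iff hyx).mp ⟨hy, hx⟩] at heD
    exact hry.trans ((SimpleGraph.fromEdgeSet_adj _).mpr ⟨heD, hyx⟩).reachable

lemma mem_edgeComponent_of_incident (he : e ∈ D) (hf : f ∈ edgeComponent D u) {x : V}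
    (hxe : x ∈ e) (hxf : x ∈ f) : e ∈ edgeComponent D u :=
  Finset.mem_filter.mpr ⟨he, x, hxe, reachable_of_mem_edgeComponent hf hxf⟩

lemma mem_edgeComponent_of_mem_of_mem (he : e ∈ D) (hu : u ∈ e) : e ∈ edgeComponent D u :=
  Finset.mem_filter.mpr ⟨he, u, hu, SimpleGraph.Reachable.refl u⟩

end Component

section Switch

variable {V : Type*} {M N : Finset (Sym2 V)}

lemma IsEdgeMatching.symmDiff_edgeComponent (hM : IsEdgeMatching M) (hN : IsEdgeMatching N)
    (u : V) : IsEdgeMatching (M ∆ edgeComponent (M ∆ N) u) := by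
  set C := edgeComponent (M ∆ N) u
  have hNC : ∀ g ∈ C, g ∉ M → g ∈ N := fun g hg hgM =>
    ((Finset.mem_symmDiff.mp (edgeComponent_subset hg)).resolve_left (by tauto)).1
  have hMC : ∀ g ∈ M, g ∉ N → g ∈ M ∆ N := fun g hgM hgN =>
    Finset.mem_symmDiff.mpr (.inl ⟨hgM, hgN⟩)
  intro e he f hf hef x ⟨hxe, hxf⟩
  rcases Finset.mem_symmDiff.mp he with ⟨heM, heC⟩ | ⟨heC, heM⟩ <;>
    rcases Finset.mem_symmDiff.mp hf with ⟨hfM, hfC⟩ | ⟨hfC, hfM⟩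
  · exact hM e heM f hfM hef x ⟨hxe, hxf⟩
  · by_cases heN : e ∈ N
    · exact hN e heN f (hNC f hfC hfM) hef x ⟨hxe, hxf⟩
    · exact heC (mem_edgeComponent_of_incident (hMC e heM heN) hfC hxe hxf)
  · by_cases hfN : f ∈ N
    · exact hN e (hNC e heC heM) f hfN hef x ⟨hxe, hxf⟩
    · exact hfC (mem_edgeComponent_of_incident (hMC f hfM hfN) heC hxf hxe)
  · exact hN e (hNC e heC heM) f (hNC f hfC hfM) hef x ⟨hxe, hxf⟩

variable [DecidableEq V]

lemma card_symmDiff_add_card_symmDiff {C : Finset (Sym2 V)} (hC : C ⊆ M ∆ N) :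
    (M ∆ C).card + (N ∆ C).card = M.card + N.card := by
  have hcard : ∀ A : Finset (Sym2 V), (A ∆ C).card + 2 * (A ∩ C).card = A.card + C.card := by
    intro A
    rw [symmDiff_def, Finset.sup_eq_union, Finset.card_union_of_disjoint disjoint_sdiff_sdiff]
    have := Finset.card_sdiff_add_card_inter A C
    have := Finset.card_sdiff_add_card_inter C A
    rw [Finset.inter_comm C A] at this
    omega
  have hsplit : (M ∩ C).card + (N ∩ C).card = C.card := by
    have hCMN : C ⊆ M ∪ N := hC.trans symmDiff_le_sup
    rw [← Finset.card_union_add_card_inter, ← Finset.union_inter_distrib_right,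
      Finset.inter_eq_right.mpr hCMN]
    suffices (M ∩ C) ∩ (N ∩ C) = ∅ by simp [this]
    refine Finset.eq_empty_of_forall_notMem fun e he => ?_
    simp only [Finset.mem_inter] at he
    rcases Finset.mem_symmDiff.mp (hC he.1.2) with h | h <;> tauto
  have := hcard M
  have := hcard N
  omega

noncomputable def switch (u : V) (p : Finset (Sym2 V) × Finset (Sym2 V)) :
    Finset (Sym2 V) × Finset (Sym2 V) :=
  (p.1 ∆ edgeComponent (p.1 ∆ p.2) u, p.2 ∆ edgeComponent (p.1 ∆ p.2) u)

lemma switch_involutive (u : V) : Function.Involutive (switch u) := by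
  rintro ⟨M, N⟩
  have hD : (M ∆ edgeComponent (M ∆ N) u) ∆ (N ∆ edgeComponent (M ∆ N) u) = M ∆ N := by
    rw [symmDiff_symmDiff_symmDiff_comm, symmDiff_self, symmDiff_bot]
  simp only [switch, hD, symmDiff_symmDiff_cancel_right]

end Switch

section Counting

variable {V : Type*} [Fintype V] {G : SimpleGraph V} {u v : V} {k l : ℕ}
  {M N : Finset (Sym2 V)}

lemma symmDiff_edgeComponent_subset {E : Finset (Sym2 V)} (hM : M ⊆ E) (hN : N ⊆ E) (w : V) :
    M ∆ edgeComponent (M ∆ N) w ⊆ E := by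
  have hMN : M ∆ N ⊆ E := symmDiff_le_sup.trans (Finset.union_subset hM hN)
  exact symmDiff_le_sup.trans (Finset.union_subset hM (edgeComponent_subset.trans hMN))

lemma switch_fst_mem_matchings (hM : M ∈ matchings G k) (hN : N ∈ matchings G l) :
    (switch u (M, N)).1 ∈ matchings G (switch u (M, N)).1.card := by
  obtain ⟨hMG, -, hMm⟩ := mem_matchings.mp hM
  obtain ⟨hNG, -, hNm⟩ := mem_matchings.mp hN
  exact mem_matchings.mpr ⟨symmDiff_edgeComponent_subset hMG hNG u, rfl,
    hMm.symmDiff_edgeComponent hNm u⟩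

lemma switch_snd_mem_matchings (hbip : G.Colorable 2) (huv : G.Adj u v)
    (hM : M ∈ matchings (deleteVerts G {u}) k) (hN : N ∈ matchings (deleteVerts G {v}) l) :
    (switch u (M, N)).2 ∈ matchings (deleteVerts G {u, v}) (switch u (M, N)).2.card := by
  obtain ⟨hM, hMu⟩ := mem_matchings_deleteVerts.mp hM
  obtain ⟨hN, hNv⟩ := mem_matchings_deleteVerts.mp hN
  obtain ⟨hMG, -, hMm⟩ := mem_matchings.mp hM
  obtain ⟨hNG, -, hNm⟩ := mem_matchings.mp hN
  simp only [Set.mem_singleton_iff, forall_eq] at hMu hNv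
  obtain ⟨c⟩ := hbip
  have hc : ∀ x y, s(x, y) ∈ M ∆ N → c x ≠ c y := fun x y hxy =>
    c.valid (G.mem_edgeFinset.mp (symmDiff_le_sup.trans (Finset.union_subset hMG hNG) hxy))
  have hunreach := hMm.not_reachable hNm hc hMu hNv (c.valid huv)
  simp only [switch]
  rw [mem_matchings_deleteVerts, symmDiff_comm M N]
  refine ⟨mem_matchings.mpr ⟨symmDiff_edgeComponent_subset hNG hMG u, rfl,
    hNm.symmDiff_edgeComponent hMm u⟩, fun e he w hw hwe => ?_⟩
  rw [symmDiff_comm N M] at he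
  rcases Finset.mem_symmDiff.mp he with ⟨heN, heC⟩ | ⟨heC, heN⟩ <;>
    rcases hw with rfl | hw
  · exact heC (mem_edgeComponent_of_mem_of_mem
      (Finset.mem_symmDiff.mpr (.inr ⟨heN, fun heM => hMu e heM hwe⟩)) hwe)
  · exact hNv e heN (hw ▸ hwe)
  · have heM := ((Finset.mem_symmDiff.mp (edgeComponent_subset heC)).resolve_right (by tauto)).1
    exact hMu e heM hwe
  · exact hunreach (hw ▸ reachable_of_mem_edgeComponent heC hwe)

theorem numMatchings_mul_numMatchings_le {n : ℕ} (hbip : G.Colorable 2) (huv : G.Adj u v)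
    (hV : Fintype.card V = 2 * n) :
    numMatchings (deleteVerts G {u}) (n - 1) * numMatchings (deleteVerts G {v}) (n - 1) ≤
      numMatchings G n * numMatchings (deleteVerts G {u, v}) (n - 2) +
        numMatchings G (n - 1) * numMatchings (deleteVerts G {u, v}) (n - 1) := by
  simp only [numMatchings_eq_card, ← Finset.card_product]
  refine (Finset.card_le_card_of_injOn (switch u) (fun p hp => ?_)
    (switch_involutive u).injective.injOn).trans (Finset.card_union_le _ _)
  obtain ⟨M, N⟩ := p
  obtain ⟨hM, hN⟩ := Finset.mem_product.mp hp
  have hfst := switch_fst_mem_matchings (u := u) (mem_matchings_deleteVerts.mp hM).1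
    (mem_matchings_deleteVerts.mp hN).1
  have hsnd := switch_snd_mem_matchings hbip huv hM hN
  set M' := (switch u (M, N)).1
  set N' := (switch u (M, N)).2
  have hsum : M'.card + N'.card = M.card + N.card :=
    card_symmDiff_add_card_symmDiff edgeComponent_subset
  rw [(mem_matchings.mp (mem_matchings_deleteVerts.mp hM).1).2.1,
    (mem_matchings.mp (mem_matchings_deleteVerts.mp hN).1).2.1] at hsum
  have hM'_le := two_mul_le_card hfst
  have hN'_le := two_mul_add_card_le_card (S := {u, v}) (by rwa [Finset.coe_pair])
  rw [Finset.card_pair huv.ne] at hN'_le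
  rw [Finset.mem_coe, Finset.mem_union, Finset.mem_product, Finset.mem_product]
  rcases (by omega : M'.card = n ∧ N'.card = n - 2 ∨ M'.card = n - 1 ∧ N'.card = n - 1)
    with ⟨h1, h2⟩ | ⟨h1, h2⟩
  · exact .inl ⟨h1 ▸ hfst, h2 ▸ hsnd⟩
  · exact .inr ⟨h1 ▸ hfst, h2 ▸ hsnd⟩

lemma numMatchings_deleteVerts_singleton_eq (hvt : ∀ u v : V, ∃ φ : G ≃g G, φ u = v)
    (u w : V) (k : ℕ) :
    numMatchings (deleteVerts G {w}) k = numMatchings (deleteVerts G {u}) k := by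
  obtain ⟨φ, rfl⟩ := hvt u w
  rw [numMatchings_congr (φ.deleteVerts {u}) k, Set.image_singleton]

lemma card_mul_numMatchings_deleteVerts_singleton (hvt : ∀ u v : V, ∃ φ : G ≃g G, φ u = v)
    (u : V) (k : ℕ) :
    Fintype.card V * numMatchings (deleteVerts G {u}) k =
      (Fintype.card V - 2 * k) * numMatchings G k := by
  rw [← sum_numMatchings_deleteVerts_singleton, Finset.sum_congr rfl
    (fun w _ => numMatchings_deleteVerts_singleton_eq hvt u w k), Finset.sum_const,
    Finset.card_univ, smul_eq_mul]

end Counting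

theorem stmt14_general {V : Type*} [Fintype V] (G : SimpleGraph V) (n : ℕ)
    (hV : Fintype.card V = 2 * n)
    (hbip : G.Colorable 2)
    (hvt : ∀ u v : V, ∃ φ : G ≃g G, φ u = v)
    (u v : V) (huv : G.Adj u v) :
    (numMatchings G n : ℝ) * numMatchings (deleteVerts G {u, v}) (n - 2) +
        (numMatchings G (n - 1) : ℝ) * numMatchings (deleteVerts G {u, v}) (n - 1) ≥
      ((numMatchings G (n - 1) : ℝ) / (n : ℝ)) ^ 2 := by
  have hn : 0 < n := by
    have := Fintype.card_pos_iff.mpr ⟨u⟩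
    omega
  have hkey := numMatchings_mul_numMatchings_le hbip huv hV
  rw [numMatchings_deleteVerts_singleton_eq hvt u v] at hkey
  have hdouble := card_mul_numMatchings_deleteVerts_singleton hvt u (n - 1)
  rw [hV, show 2 * n - 2 * (n - 1) = 2 by omega, mul_assoc] at hdouble
  have hdiv : (numMatchings G (n - 1) : ℝ) / n = numMatchings (deleteVerts G {u}) (n - 1) := by
    rw [div_eq_iff (by positivity), ← Nat.eq_of_mul_eq_mul_left two_pos hdouble]
    push_cast
    ring
  rw [ge_iff_le, hdiv, sq]
  exact_mod_cast hkey

theorem stmt14 {V : Type*} [Fintype V] (G : SimpleGraph V) (d n : ℕ)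
    (hV : Fintype.card V = 2 * n)
    (hreg : G.IsRegularOfDegree d) (hbip : G.Colorable 2)
    (hvt : ∀ u v : V, ∃ φ : G ≃g G, φ u = v)
    (u v : V) (huv : G.Adj u v) :
    (numMatchings G n : ℝ) * numMatchings (deleteVerts G {u, v}) (n - 2) +
        (numMatchings G (n - 1) : ℝ) * numMatchings (deleteVerts G {u, v}) (n - 1) ≥
      ((numMatchings G (n - 1) : ℝ) / (n : ℝ)) ^ 2 :=
  stmt14_general G n hV hbip hvt u v huv
end

section
/- For any graph G with vertex set S deleted, if every vertex of G has degree at most d, then M(G\S, t)·(1 + d·t)^{|S|} ≥ M(G,t) for all t ≥ 0. -/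
/-!
Split the matchings of `G` of size `k + 1` according to whether they cover a vertex `v`: those
that do not are matchings of `G - v`, and those that do are `e ∪ N` for one of the `deg v ≤ d`
edges `e` at `v` and a matching `N` of `G - v` of size `k`. Hence
`m_{k+1}(G) ≤ m_{k+1}(G - v) + d · m_k(G - v)`, which for `t ≥ 0` gives
`M(G, t) ≤ M(G - v, t) (1 + d t)`. Deleting the vertices of `S` one at a time proves the theorem,
since deleting vertices does not increase degrees.
-/

open scoped Classical
open Finset

namespace SimpleGraph

variable {V : Type*}

lemma deleteVerts_le (G : SimpleGraph V) (S : Set V) : deleteVerts G S ≤ G :=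
  fun _ _ h => h.1

@[simp]
lemma deleteVerts_empty (G : SimpleGraph V) : deleteVerts G ∅ = G := by
  ext a b
  simp [deleteVerts]

lemma deleteVerts_deleteVerts (G : SimpleGraph V) (S T : Set V) :
    deleteVerts (deleteVerts G S) T = deleteVerts G (S ∪ T) := by
  ext a b
  simp only [deleteVerts, Set.mem_union]
  tauto

lemma mem_edgeSet_deleteVerts (G : SimpleGraph V) (S : Set V) (e : Sym2 V) :
    e ∈ (deleteVerts G S).edgeSet ↔ e ∈ G.edgeSet ∧ ∀ w ∈ e, w ∉ S := by
  induction e using Sym2.ind with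
  | _ a b => simp [deleteVerts]

end SimpleGraph

open SimpleGraph

section Matchings

variable {V : Type*} [Fintype V]

noncomputable def matchingsOfCard (G : SimpleGraph V) (k : ℕ) : Finset (Finset (Sym2 V)) :=
  G.edgeFinset.powerset.filter (fun M => M.card = k ∧
    ∀ e ∈ M, ∀ f ∈ M, e ≠ f → ∀ v : V, ¬(v ∈ e ∧ v ∈ f))

lemma card_matchingsOfCard (G : SimpleGraph V) (k : ℕ) :
    (matchingsOfCard G k).card = numMatchings G k := rfl

lemma mem_matchingsOfCard {G : SimpleGraph V} {k : ℕ} {M : Finset (Sym2 V)} :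
    M ∈ matchingsOfCard G k ↔ M ⊆ G.edgeFinset ∧ M.card = k ∧
      ∀ e ∈ M, ∀ f ∈ M, e ≠ f → ∀ v : V, ¬(v ∈ e ∧ v ∈ f) := by
  simp [matchingsOfCard]

lemma numMatchings_zero (G : SimpleGraph V) : numMatchings G 0 = 1 := by
  rw [← card_matchingsOfCard, card_eq_one]
  refine ⟨∅, ?_⟩
  ext M
  simp only [mem_matchingsOfCard, card_eq_zero, mem_singleton]
  constructor
  · exact fun h => h.2.1
  · rintro rfl
    simp

lemma mem_matchingsOfCard_deleteVerts_singleton {G : SimpleGraph V} {k : ℕ} {v : V}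
    {M : Finset (Sym2 V)} :
    M ∈ matchingsOfCard (deleteVerts G {v}) k ↔ M ∈ matchingsOfCard G k ∧ ∀ e ∈ M, v ∉ e := by
  simp only [mem_matchingsOfCard, subset_iff, mem_edgeFinset, mem_edgeSet_deleteVerts,
    Set.mem_singleton_iff]
  constructor
  · rintro ⟨hsub, hcard, hdisj⟩
    exact ⟨⟨fun e he => (hsub he).1, hcard, hdisj⟩, fun e he hv => (hsub he).2 v hv rfl⟩
  · rintro ⟨⟨hsub, hcard, hdisj⟩, hv⟩
    exact ⟨fun e he => ⟨hsub he, fun w hw hwv => hv e he (hwv ▸ hw)⟩, hcard, hdisj⟩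

lemma erase_mem_matchingsOfCard_deleteVerts {G : SimpleGraph V} {k : ℕ} {v : V}
    {M : Finset (Sym2 V)} {e : Sym2 V} (hM : M ∈ matchingsOfCard G (k + 1)) (he : e ∈ M)
    (hv : v ∈ e) : M.erase e ∈ matchingsOfCard (deleteVerts G {v}) k := by
  obtain ⟨hsub, hcard, hdisj⟩ := mem_matchingsOfCard.1 hM
  refine mem_matchingsOfCard_deleteVerts_singleton.2 ⟨mem_matchingsOfCard.2
    ⟨(erase_subset e M).trans hsub, by rw [card_erase_of_mem he, hcard, Nat.add_sub_cancel], ?_⟩,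
    ?_⟩
  · exact fun f hf g hg => hdisj f (mem_of_mem_erase hf) g (mem_of_mem_erase hg)
  · intro f hf hvf
    obtain ⟨hfe, hfM⟩ := mem_erase.1 hf
    exact hdisj f hfM e he hfe v ⟨hvf, hv⟩

theorem numMatchings_succ_le (G : SimpleGraph V) (v : V) (k : ℕ) :
    numMatchings G (k + 1) ≤ numMatchings (deleteVerts G {v}) (k + 1)
      + G.degree v * numMatchings (deleteVerts G {v}) k := by
  simp only [← card_matchingsOfCard, ← card_incidenceFinset_eq_degree, ← card_product]
  rw [← card_filter_add_card_filter_not (fun M => ∀ e ∈ M, v ∉ e)]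
  gcongr
  · intro M hM
    exact mem_matchingsOfCard_deleteVerts_singleton.2 (mem_filter.1 hM)
  · refine (card_le_card fun M hM => ?_).trans
      (card_image_le (f := fun p : Sym2 V × Finset (Sym2 V) => insert p.1 p.2))
    obtain ⟨hM, hcover⟩ := mem_filter.1 hM
    push Not at hcover
    obtain ⟨e, he, hv⟩ := hcover
    have hadj : e ∈ G.edgeSet := mem_edgeFinset.1 ((mem_matchingsOfCard.1 hM).1 he)
    exact mem_image.2 ⟨(e, M.erase e),
      mem_product.2 ⟨(mem_incidenceFinset G v e).2 ⟨hadj, hv⟩,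
        erase_mem_matchingsOfCard_deleteVerts hM he hv⟩,
      insert_erase he⟩

end Matchings

theorem sum_range_mul_pow_le_mul {a b : ℕ → ℝ} {c t : ℝ} (hb : ∀ k, 0 ≤ b k) (hc : 0 ≤ c)
    (ht : 0 ≤ t) (h0 : a 0 ≤ b 0) (hsucc : ∀ k, a (k + 1) ≤ b (k + 1) + c * b k) (n : ℕ) :
    ∑ k ∈ range (n + 1), a k * t ^ k ≤ (∑ k ∈ range (n + 1), b k * t ^ k) * (1 + c * t) := by
  have hshifted : ∀ n, ∑ k ∈ range (n + 1), a k * t ^ k ≤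
      ∑ k ∈ range (n + 1), b k * t ^ k + c * t * ∑ k ∈ range n, b k * t ^ k := by
    intro n
    induction n with
    | zero => simpa using h0
    | succ n ih =>
      rw [sum_range_succ _ (n + 1), sum_range_succ _ (n + 1)]
      have hstep := mul_le_mul_of_nonneg_right (hsucc n) (pow_nonneg ht (n + 1))
      have hsplit := sum_range_succ (fun k => b k * t ^ k) n
      linear_combination ih + hstep - c * t * hsplit
  have hpartial : ∑ k ∈ range n, b k * t ^ k ≤ ∑ k ∈ range (n + 1), b k * t ^ k := by
    rw [sum_range_succ]
    exact le_add_of_nonneg_right (mul_nonneg (hb n) (pow_nonneg ht n))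
  calc ∑ k ∈ range (n + 1), a k * t ^ k
      ≤ ∑ k ∈ range (n + 1), b k * t ^ k + c * t * ∑ k ∈ range n, b k * t ^ k := hshifted n
    _ ≤ ∑ k ∈ range (n + 1), b k * t ^ k + c * t * ∑ k ∈ range (n + 1), b k * t ^ k := by
      gcongr
    _ = (∑ k ∈ range (n + 1), b k * t ^ k) * (1 + c * t) := by ring

theorem matchGen_le_matchGen_deleteVerts_singleton_mul {V : Type*} [Fintype V]
    (G : SimpleGraph V) {d : ℕ} (hdeg : ∀ w, G.degree w ≤ d) (v : V) {t : ℝ} (ht : 0 ≤ t) :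
    matchGen G t ≤ matchGen (deleteVerts G {v}) t * (1 + d * t) := by
  refine sum_range_mul_pow_le_mul (fun k => Nat.cast_nonneg _) (Nat.cast_nonneg d) ht ?_
    (fun k => ?_) _
  · rw [numMatchings_zero, numMatchings_zero]
  · exact_mod_cast (numMatchings_succ_le G v k).trans
      (Nat.add_le_add_left (Nat.mul_le_mul_right _ (hdeg v)) _)

theorem stmt16 {V : Type*} [Fintype V] (G : SimpleGraph V) (d : ℕ)
    (hdeg : ∀ v : V, G.degree v ≤ d) (S : Finset V) (t : ℝ) (ht : 0 ≤ t) :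
    matchGen G t ≤ matchGen (deleteVerts G ↑S) t * (1 + d * t) ^ S.card := by
  induction S using Finset.induction_on with
  | empty => simp
  | @insert a s ha ih =>
    have hdeg' : ∀ w, (deleteVerts G ↑s).degree w ≤ d :=
      fun w => (degree_le_of_le (deleteVerts_le G _)).trans (hdeg w)
    have hstep := matchGen_le_matchGen_deleteVerts_singleton_mul _ hdeg' a ht
    rw [deleteVerts_deleteVerts, Set.union_singleton, ← coe_insert] at hstep
    calc matchGen G t ≤ matchGen (deleteVerts G ↑s) t * (1 + d * t) ^ s.card := ih
      _ ≤ matchGen (deleteVerts G ↑(insert a s)) t * (1 + d * t) * (1 + d * t) ^ s.card := by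
        gcongr
      _ = matchGen (deleteVerts G ↑(insert a s)) t * (1 + d * t) ^ (insert a s).card := by
        rw [card_insert_of_notMem ha]
        ring
end
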